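/- (Proposition 2(2), momentum marginal.) Assume v_0,…,v_N is an orthonormal basis of ℂ^{N+1} such that P v_k = p_k v_k for each k ∈ {0,…,N}. Then for each n and each k ∈ {0,…,N}, the row sums of the Wigner matrix recover the momentum probability distribution: ∑_{l=0}^{N} W(n)_{k,l} = |(v_k)_n|², where (v_k)_n denotes the n-th coordinate of v_k (the momentum wavefunction value ψ_n(p_k)). -/

import Mathlib

open Matrix

/-!
The vector `1` is the first column of `V(q)`, so `V(q)⁻¹ 1 = e₀` and the row sums of `W(n)` are
`V(p)⁻ᵀ` applied to the column `Z(n)_{·,0}`. Since `Ĝ_{a,0} = Pᵃ` and, expanding `eₙ` in the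
eigenbasis, `(Pᵃ)_{nn} = ∑ⱼ pⱼᵃ |(vⱼ)ₙ|²`, that column is `V(p)ᵀ` applied to the vector
`(|(vⱼ)ₙ|²)ⱼ`, and `V(p)⁻ᵀ` undoes it.
-/

noncomputable def weylG {N : ℕ} (P Q : Matrix (Fin (N + 1)) (Fin (N + 1)) ℂ) (a b : ℕ) :
    Matrix (Fin (N + 1)) (Fin (N + 1)) ℂ :=
  (((a + b).choose a : ℂ))⁻¹ •
    ∑ S ∈ Finset.univ.filter (fun S : Finset (Fin (a + b)) => S.card = a),
      (List.ofFn fun i : Fin (a + b) => if i ∈ S then P else Q).prod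

noncomputable def zMat {N : ℕ} (P Q : Matrix (Fin (N + 1)) (Fin (N + 1)) ℂ)
    (n : Fin (N + 1)) : Matrix (Fin (N + 1)) (Fin (N + 1)) ℂ :=
  Matrix.of fun a b : Fin (N + 1) => weylG P Q a.val b.val n n

noncomputable def wignerW {N : ℕ} (P Q : Matrix (Fin (N + 1)) (Fin (N + 1)) ℂ)
    (p q : Fin (N + 1) → ℝ) (n : Fin (N + 1)) : Matrix (Fin (N + 1)) (Fin (N + 1)) ℂ :=
  ((Matrix.vandermonde fun k => (p k : ℂ))ᵀ)⁻¹ * zMat P Q n *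
    (Matrix.vandermonde fun l => (q l : ℂ))⁻¹

namespace Matrix

theorem pow_mulVec_of_mulVec_eq_smul {ι R : Type*} [Fintype ι] [DecidableEq ι] [CommSemiring R]
    {P : Matrix ι ι R} {x : ι → R} {c : R} (h : P *ᵥ x = c • x) (a : ℕ) :
    (P ^ a) *ᵥ x = c ^ a • x := by
  induction a with
  | zero => simp
  | succ a ih => rw [pow_succ, ← mulVec_mulVec, h, mulVec_smul, ih, smul_smul, ← pow_succ']

theorem vandermonde_mulVec_single_zero {R : Type*} [CommRing R] {m : ℕ}
    (v : Fin (m + 1) → R) : vandermonde v *ᵥ Pi.single 0 1 = 1 := by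
  ext i
  simp [vandermonde_apply]

theorem isUnit_det_vandermonde {K : Type*} [Field K] {m : ℕ} {v : Fin m → K}
    (hv : Function.Injective v) : IsUnit (vandermonde v).det :=
  isUnit_iff_ne_zero.mpr (det_vandermonde_ne_zero_iff.mpr hv)

theorem inv_vandermonde_mulVec_one {K : Type*} [Field K] {m : ℕ} {v : Fin (m + 1) → K}
    (hv : Function.Injective v) : (vandermonde v)⁻¹ *ᵥ 1 = Pi.single 0 1 := by
  rw [← vandermonde_mulVec_single_zero v, mulVec_mulVec,
    nonsing_inv_mul _ (isUnit_det_vandermonde hv), one_mulVec]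

end Matrix

section OrthonormalEigenbasis

variable {𝕜 ι : Type*} [RCLike 𝕜] [Fintype ι] [DecidableEq ι] {v : ι → ι → 𝕜}

theorem sum_mul_star_eq_of_orthonormal
    (hortho : ∀ k k', star (v k) ⬝ᵥ v k' = if k = k' then 1 else 0) (i i' : ι) :
    ∑ j, v j i * star (v j i') = if i = i' then 1 else 0 := by
  let U : Matrix ι ι 𝕜 := of fun i j => v j i
  have hU : Uᴴ * U = 1 := by
    ext k k'
    simpa [U, mul_apply, dotProduct, one_apply] using hortho k k'
  have hU' : U * Uᴴ = 1 := mul_eq_one_comm.mp hU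
  simpa [U, mul_apply, one_apply] using congrFun (congrFun hU' i) i'

theorem single_eq_sum_star_smul_of_orthonormal
    (hortho : ∀ k k', star (v k) ⬝ᵥ v k' = if k = k' then 1 else 0) (i : ι) :
    Pi.single i 1 = ∑ j, star (v j i) • v j := by
  ext i'
  simpa [Finset.sum_apply, Pi.single_apply, mul_comm, eq_comm] using
    sum_mul_star_eq_of_orthonormal hortho i' i

theorem pow_apply_self_eq_sum_of_orthonormal_eigenbasis {P : Matrix ι ι 𝕜} {p : ι → 𝕜}
    (hortho : ∀ k k', star (v k) ⬝ᵥ v k' = if k = k' then 1 else 0)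
    (heig : ∀ k, P *ᵥ v k = p k • v k) (a : ℕ) (i : ι) :
    (P ^ a) i i = ∑ j, p j ^ a * (‖v j i‖ : 𝕜) ^ 2 := by
  have hcol : (P ^ a) i i = ((P ^ a) *ᵥ Pi.single i 1) i := by simp
  rw [hcol, single_eq_sum_star_smul_of_orthonormal hortho i, mulVec_sum]
  simp only [mulVec_smul, pow_mulVec_of_mulVec_eq_smul (heig _), Finset.sum_apply,
    Pi.smul_apply, smul_eq_mul, ← RCLike.mul_conj]
  exact Finset.sum_congr rfl fun j _ => by rw [RCLike.star_def]; ring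

end OrthonormalEigenbasis

theorem weylG_zero_right {N : ℕ} (P Q : Matrix (Fin (N + 1)) (Fin (N + 1)) ℂ) (a : ℕ) :
    weylG P Q a 0 = P ^ a := by
  have hfull :
      Finset.univ.filter (fun S : Finset (Fin (a + 0)) => S.card = a) = {Finset.univ} := by
    ext S
    simp [← Finset.card_eq_iff_eq_univ]
  simp [weylG, hfull, List.ofFn_const, List.prod_replicate]

theorem zMat_mulVec_single_zero {N : ℕ} (P Q : Matrix (Fin (N + 1)) (Fin (N + 1)) ℂ)
    (n a : Fin (N + 1)) : (zMat P Q n *ᵥ Pi.single 0 1) a = (P ^ (a : ℕ)) n n := by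
  simp [zMat, weylG_zero_right]

/-- Proposition 2(2), momentum marginal: if `v₀,…,v_N` is an orthonormal basis of `ℂ^{N+1}`
of eigenvectors of `P` with `P vₖ = pₖ vₖ`, then the row sums of the Wigner matrix
recover the momentum probability distribution: `∑ₗ W(n)_{k,l} = |(vₖ)ₙ|²`. -/
theorem wignerW_momentum_marginal {N : ℕ}
    (P Q : Matrix (Fin (N + 1)) (Fin (N + 1)) ℂ)
    (p q : Fin (N + 1) → ℝ) (hp : Function.Injective p) (hq : Function.Injective q)
    (v : Fin (N + 1) → (Fin (N + 1) → ℂ))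
    (hortho : ∀ k k' : Fin (N + 1),
      (star (v k)) ⬝ᵥ (v k') = if k = k' then 1 else 0)
    (heig : ∀ k : Fin (N + 1), P.mulVec (v k) = (p k : ℂ) • v k)
    (n : Fin (N + 1)) :
    ∀ k : Fin (N + 1),
      ∑ l : Fin (N + 1), wignerW P Q p q n k l = ((‖v k n‖ : ℝ) : ℂ) ^ 2 := by
  intro k
  set Vp := vandermonde fun k => (p k : ℂ)
  have hVp : IsUnit Vpᵀ.det := by
    rw [det_transpose]
    exact isUnit_det_vandermonde (Complex.ofReal_injective.comp hp)
  have hcol : zMat P Q n *ᵥ Pi.single 0 1 = Vpᵀ *ᵥ fun j => ((‖v j n‖ : ℝ) : ℂ) ^ 2 := by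
    ext a
    rw [zMat_mulVec_single_zero, pow_apply_self_eq_sum_of_orthonormal_eigenbasis hortho heig]
    simp [Vp, mulVec, dotProduct, vandermonde_apply]
  calc ∑ l, wignerW P Q p q n k l = (wignerW P Q p q n *ᵥ 1) k := by simp [mulVec, dotProduct]
    _ = (Vpᵀ⁻¹ *ᵥ (zMat P Q n *ᵥ Pi.single 0 1)) k := by
      rw [wignerW, ← mulVec_mulVec,
        inv_vandermonde_mulVec_one (v := fun l => (q l : ℂ)) (Complex.ofReal_injective.comp hq),
        mulVec_mulVec]
    _ = ((‖v k n‖ : ℝ) : ℂ) ^ 2 := by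
      rw [hcol, mulVec_mulVec, nonsing_inv_mul _ hVp, one_mulVec]
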